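/- arXiv:2412.00937 — 2 statements merged into one kernel-verified Lean document; each statement's English description precedes it below -/
import Mathlib

section
/- The set L5 of 40 points in ℝ^5, consisting of the 24 vectors (±1,±1,0,0,0)-type with fifth coordinate 0 (all permutations of ±1,±1,0 among the first four coordinates), the 8 vectors (±1/2,±1/2,±1/2,±1/2,1) with an odd number of minus signs, and the 8 vectors of the form (±1,0,0,0,-1) with the ±1 in one of the first four coordinates, is a kissing configuration: each point has squared norm 2 and any two distinct points have inner product at most 1. -/
open Finset

/-- Leech's five-dimensional kissing configuration `L5`. -/
def L5 : Set (Fin 5 → ℝ) :=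
  {v | (v 4 = 0 ∧ (∀ i, v i = -1 ∨ v i = 0 ∨ v i = 1) ∧
          (Finset.univ.filter fun i => v i ≠ 0).card = 2)
     ∨ (v 4 = 1 ∧ (∀ i : Fin 4, v i.castSucc = 1/2 ∨ v i.castSucc = -(1/2)) ∧
          Odd (Finset.univ.filter fun i : Fin 4 => v i.castSucc = -(1/2)).card)
     ∨ (v 4 = -1 ∧ (∀ i : Fin 4, v i.castSucc = -1 ∨ v i.castSucc = 0 ∨ v i.castSucc = 1) ∧
          (Finset.univ.filter fun i : Fin 4 => v i.castSucc ≠ 0).card = 1)}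

lemma sum_ite_c {n : ℕ} (p : Fin n → Prop) [DecidablePred p] (c : ℝ) :
    ∑ i, (if p i then c else 0) = c * (Finset.univ.filter p).card := by
  have h : ∀ i, (if p i then c else 0) = c * (if p i then (1:ℝ) else 0) := by
    intro i; split <;> ring
  rw [Finset.sum_congr rfl fun i _ => h i, ← Finset.mul_sum, Finset.sum_boole]

lemma int_le_one (x : ℝ) (h : ∃ n : ℤ, x = n) (h2 : x < 2) : x ≤ 1 := by
  obtain ⟨n, rfl⟩ := h
  have : n < 2 := by exact_mod_cast h2
  exact_mod_cast Int.lt_add_one_iff.mp this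

lemma sum_int {f : Fin 5 → ℝ} (h : ∀ i, ∃ n : ℤ, f i = n) : ∃ n : ℤ, ∑ i, f i = n := by
  choose g hg using h
  exact ⟨∑ i, g i, by rw [Finset.sum_congr rfl fun i _ => hg i]; push_cast; rfl⟩

lemma prod_int {x y : ℝ} (hx : x = -1 ∨ x = 0 ∨ x = 1) (hy : y = -1 ∨ y = 0 ∨ y = 1) :
    ∃ n : ℤ, x * y = n := by
  rcases hx with h | h | h <;> rcases hy with h' | h' | h' <;> rw [h, h']
  exacts [⟨1, by norm_num⟩, ⟨0, by norm_num⟩, ⟨-1, by norm_num⟩,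
    ⟨0, by norm_num⟩, ⟨0, by norm_num⟩, ⟨0, by norm_num⟩,
    ⟨-1, by norm_num⟩, ⟨0, by norm_num⟩, ⟨1, by norm_num⟩]

lemma cs_strict (u v : Fin 5 → ℝ) (hu : ∑ i, u i * u i = 2) (hv : ∑ i, v i * v i = 2)
    (hne : u ≠ v) : ∑ i, u i * v i < 2 := by
  have key : 0 < ∑ i, (u i - v i) * (u i - v i) := by
    obtain ⟨j, hj⟩ := Function.ne_iff.mp hne
    refine Finset.sum_pos' (fun i _ => mul_self_nonneg _) ⟨j, Finset.mem_univ j, ?_⟩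
    exact mul_self_pos.mpr (sub_ne_zero.mpr hj)
  have expand : ∑ i, (u i - v i) * (u i - v i)
      = (∑ i, u i * u i) + (∑ i, v i * v i) - 2 * ∑ i, u i * v i := by
    rw [Finset.mul_sum, ← Finset.sum_add_distrib, ← Finset.sum_sub_distrib]
    exact Finset.sum_congr rfl fun i _ => by ring
  rw [expand, hu, hv] at key; linarith

-- Norm lemmas
lemma norm1 (v : Fin 5 → ℝ) (ht : ∀ i, v i = -1 ∨ v i = 0 ∨ v i = 1)
    (hc : (Finset.univ.filter fun i => v i ≠ 0).card = 2) : ∑ i, v i * v i = 2 := by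
  have h : ∀ i : Fin 5, v i * v i = if v i ≠ 0 then (1:ℝ) else 0 := by
    intro i; rcases ht i with h | h | h <;> rw [h] <;> norm_num
  rw [Finset.sum_congr rfl fun i _ => h i, sum_ite_c, hc]; norm_num

lemma norm2 (v : Fin 5 → ℝ) (h4 : v 4 = 1)
    (ht : ∀ i : Fin 4, v i.castSucc = 1/2 ∨ v i.castSucc = -(1/2)) :
    ∑ i, v i * v i = 2 := by
  rw [Fin.sum_univ_castSucc, show v (Fin.last 4) = 1 from h4]
  have h : ∀ j : Fin 4, v j.castSucc * v j.castSucc = (1/4 : ℝ) := by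
    intro j; rcases ht j with h | h <;> rw [h] <;> norm_num
  rw [Finset.sum_congr rfl fun j _ => h j]
  norm_num

lemma norm3 (v : Fin 5 → ℝ) (h4 : v 4 = -1)
    (ht : ∀ i : Fin 4, v i.castSucc = -1 ∨ v i.castSucc = 0 ∨ v i.castSucc = 1)
    (hc : (Finset.univ.filter fun i : Fin 4 => v i.castSucc ≠ 0).card = 1) :
    ∑ i, v i * v i = 2 := by
  rw [Fin.sum_univ_castSucc, show v (Fin.last 4) = -1 from h4]
  have h : ∀ j : Fin 4, v j.castSucc * v j.castSucc = if v j.castSucc ≠ 0 then (1:ℝ) else 0 := by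
    intro j; rcases ht j with h | h | h <;> rw [h] <;> norm_num
  rw [Finset.sum_congr rfl fun j _ => h j, sum_ite_c, hc]; norm_num

-- Inner product lemmas
lemma inner11 (u v : Fin 5 → ℝ)
    (hut : ∀ i, u i = -1 ∨ u i = 0 ∨ u i = 1)
    (huc : (Finset.univ.filter fun i => u i ≠ 0).card = 2)
    (hvt : ∀ i, v i = -1 ∨ v i = 0 ∨ v i = 1)
    (hvc : (Finset.univ.filter fun i => v i ≠ 0).card = 2)
    (hne : u ≠ v) : ∑ i, u i * v i ≤ 1 := by
  refine int_le_one _ (sum_int fun i => prod_int (hut i) (hvt i)) ?_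
  exact cs_strict u v (norm1 u hut huc) (norm1 v hvt hvc) hne

lemma inner33 (u v : Fin 5 → ℝ) (hu4 : u 4 = -1) (hv4 : v 4 = -1)
    (hut : ∀ i : Fin 4, u i.castSucc = -1 ∨ u i.castSucc = 0 ∨ u i.castSucc = 1)
    (huc : (Finset.univ.filter fun i : Fin 4 => u i.castSucc ≠ 0).card = 1)
    (hvt : ∀ i : Fin 4, v i.castSucc = -1 ∨ v i.castSucc = 0 ∨ v i.castSucc = 1)
    (hvc : (Finset.univ.filter fun i : Fin 4 => v i.castSucc ≠ 0).card = 1)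
    (hne : u ≠ v) : ∑ i, u i * v i ≤ 1 := by
  refine int_le_one _ (sum_int fun i => ?_) (cs_strict u v (norm3 u hu4 hut huc)
    (norm3 v hv4 hvt hvc) hne)
  induction i using Fin.lastCases with
  | last =>
    exact ⟨1, by rw [show u (Fin.last 4) = -1 from hu4, show v (Fin.last 4) = -1 from hv4]; norm_num⟩
  | cast j => exact prod_int (hut j) (hvt j)

lemma inner12 (u v : Fin 5 → ℝ) (hu4 : u 4 = 0)
    (hut : ∀ i, u i = -1 ∨ u i = 0 ∨ u i = 1)
    (huc : (Finset.univ.filter fun i => u i ≠ 0).card = 2)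
    (hvt : ∀ i : Fin 4, v i.castSucc = 1/2 ∨ v i.castSucc = -(1/2)) :
    ∑ i, u i * v i ≤ 1 := by
  have step : ∀ i : Fin 5, u i * v i ≤ if u i ≠ 0 then (1/2:ℝ) else 0 := by
    intro i
    induction i using Fin.lastCases with
    | last => rw [show u (Fin.last 4) = 0 from hu4]; norm_num
    | cast j =>
      rcases hut j.castSucc with h | h | h <;> rcases hvt j with h' | h' <;>
        rw [h, h'] <;> norm_num
  calc ∑ i, u i * v i ≤ ∑ i, (if u i ≠ 0 then (1/2:ℝ) else 0) :=
        Finset.sum_le_sum fun i _ => step i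
    _ = 1 := by rw [sum_ite_c, huc]; norm_num

lemma inner13 (u v : Fin 5 → ℝ) (hu4 : u 4 = 0)
    (hut : ∀ i, u i = -1 ∨ u i = 0 ∨ u i = 1)
    (hvt : ∀ i : Fin 4, v i.castSucc = -1 ∨ v i.castSucc = 0 ∨ v i.castSucc = 1)
    (hvc : (Finset.univ.filter fun i : Fin 4 => v i.castSucc ≠ 0).card = 1) :
    ∑ i, u i * v i ≤ 1 := by
  rw [Fin.sum_univ_castSucc, show u (Fin.last 4) = 0 from hu4]
  have step : ∀ j : Fin 4,
      u j.castSucc * v j.castSucc ≤ if v j.castSucc ≠ 0 then (1:ℝ) else 0 := by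
    intro j
    rcases hut j.castSucc with h | h | h <;> rcases hvt j with h' | h' | h' <;>
      rw [h, h'] <;> norm_num
  have h : ∑ j : Fin 4, u j.castSucc * v j.castSucc ≤ 1 := by
    calc ∑ j : Fin 4, u j.castSucc * v j.castSucc
        ≤ ∑ j : Fin 4, (if v j.castSucc ≠ 0 then (1:ℝ) else 0) :=
          Finset.sum_le_sum fun j _ => step j
      _ = 1 := by rw [sum_ite_c, hvc]; norm_num
  linarith

lemma inner23 (u v : Fin 5 → ℝ) (hu4 : u 4 = 1) (hv4 : v 4 = -1)
    (hut : ∀ i : Fin 4, u i.castSucc = 1/2 ∨ u i.castSucc = -(1/2))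
    (hvt : ∀ i : Fin 4, v i.castSucc = -1 ∨ v i.castSucc = 0 ∨ v i.castSucc = 1)
    (hvc : (Finset.univ.filter fun i : Fin 4 => v i.castSucc ≠ 0).card = 1) :
    ∑ i, u i * v i ≤ 1 := by
  rw [Fin.sum_univ_castSucc, show u (Fin.last 4) = 1 from hu4,
    show v (Fin.last 4) = -1 from hv4]
  have step : ∀ j : Fin 4,
      u j.castSucc * v j.castSucc ≤ if v j.castSucc ≠ 0 then (1/2:ℝ) else 0 := by
    intro j
    rcases hut j with h | h <;> rcases hvt j with h' | h' | h' <;>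
      rw [h, h'] <;> norm_num
  have h : ∑ j : Fin 4, u j.castSucc * v j.castSucc ≤ 1/2 := by
    calc ∑ j : Fin 4, u j.castSucc * v j.castSucc
        ≤ ∑ j : Fin 4, (if v j.castSucc ≠ 0 then (1/2:ℝ) else 0) :=
          Finset.sum_le_sum fun j _ => step j
      _ = 1/2 := by rw [sum_ite_c, hvc]; norm_num
  linarith

lemma inner22 (u v : Fin 5 → ℝ) (hu4 : u 4 = 1) (hv4 : v 4 = 1)
    (hut : ∀ i : Fin 4, u i.castSucc = 1/2 ∨ u i.castSucc = -(1/2))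
    (huo : Odd (Finset.univ.filter fun i : Fin 4 => u i.castSucc = -(1/2)).card)
    (hvt : ∀ i : Fin 4, v i.castSucc = 1/2 ∨ v i.castSucc = -(1/2))
    (hvo : Odd (Finset.univ.filter fun i : Fin 4 => v i.castSucc = -(1/2)).card)
    (hne : u ≠ v) : ∑ i, u i * v i ≤ 1 := by
  classical
  set A := Finset.univ.filter fun i : Fin 4 => u i.castSucc = -(1/2) with hA
  set B := Finset.univ.filter fun i : Fin 4 => v i.castSucc = -(1/2) with hB
  set D := Finset.univ.filter fun i : Fin 4 => u i.castSucc ≠ v i.castSucc with hD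
  have hDeq : D = (A \ B) ∪ (B \ A) := by
    ext i
    simp only [hD, hA, hB, Finset.mem_filter, Finset.mem_univ, true_and, Finset.mem_union,
      Finset.mem_sdiff]
    rcases hut i with h | h <;> rcases hvt i with h' | h' <;> rw [h, h'] <;> norm_num
  have hDcard : Even D.card := by
    have hcard : D.card = (A \ B).card + (B \ A).card := by
      rw [hDeq, Finset.card_union_of_disjoint disjoint_sdiff_sdiff]
    have h5 : (A \ B).card + (A ∩ B).card = A.card := Finset.card_sdiff_add_card_inter A B
    have h6 : (B \ A).card + (B ∩ A).card = B.card := Finset.card_sdiff_add_card_inter B A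
    have h7 : (A ∩ B).card = (B ∩ A).card := by rw [Finset.inter_comm]
    obtain ⟨a, ha⟩ := huo
    obtain ⟨b, hb⟩ := hvo
    rw [Nat.even_iff]
    omega
  have hDne : D.Nonempty := by
    rw [hD, Finset.filter_nonempty_iff]
    by_contra hcon
    push_neg at hcon
    apply hne
    funext i
    induction i using Fin.lastCases with
    | last => rw [show u (Fin.last 4) = 1 from hu4, show v (Fin.last 4) = 1 from hv4]
    | cast j => exact hcon j (Finset.mem_univ j)
  have hD2 : 2 ≤ D.card := by
    obtain ⟨r, hr⟩ := hDcard
    have := Finset.card_pos.mpr hDne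
    omega
  rw [Fin.sum_univ_castSucc, show u (Fin.last 4) = 1 from hu4,
    show v (Fin.last 4) = 1 from hv4]
  have hterm : ∀ j : Fin 4, u j.castSucc * v j.castSucc
      = 1/4 - (if u j.castSucc ≠ v j.castSucc then (1/2:ℝ) else 0) := by
    intro j
    rcases hut j with h | h <;> rcases hvt j with h' | h' <;> rw [h, h'] <;> norm_num
  rw [Finset.sum_congr rfl fun j _ => hterm j, Finset.sum_sub_distrib, sum_ite_c]
  have hcast : (2:ℝ) ≤ (D.card : ℝ) := by exact_mod_cast hD2
  have : ∑ _j : Fin 4, (1/4 : ℝ) = 1 := by norm_num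
  rw [this]
  rw [hD] at hcast
  linarith

theorem stmt2 :
    (∀ v ∈ L5, ∑ i, v i * v i = 2) ∧
    (∀ u ∈ L5, ∀ v ∈ L5, u ≠ v → ∑ i, u i * v i ≤ 1) := by
  constructor
  · rintro v (⟨h4, ht, hc⟩ | ⟨h4, ht, hc⟩ | ⟨h4, ht, hc⟩)
    · exact norm1 v ht hc
    · exact norm2 v h4 ht
    · exact norm3 v h4 ht hc
  · intro u hu v hv hne
    have comm : ∑ i, u i * v i = ∑ i, v i * u i :=
      Finset.sum_congr rfl fun i _ => mul_comm _ _
    rcases hu with ⟨hu4, hut, huc⟩ | ⟨hu4, hut, huc⟩ | ⟨hu4, hut, huc⟩ <;>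
      rcases hv with ⟨hv4, hvt, hvc⟩ | ⟨hv4, hvt, hvc⟩ | ⟨hv4, hvt, hvc⟩
    · exact inner11 u v hut huc hvt hvc hne
    · exact inner12 u v hu4 hut huc hvt
    · exact inner13 u v hu4 hut hvt hvc
    · rw [comm]; exact inner12 v u hv4 hvt hvc hut
    · exact inner22 u v hu4 hv4 hut huc hvt hvc hne
    · exact inner23 u v hu4 hv4 hut hvt hvc
    · rw [comm]; exact inner13 v u hv4 hvt hut huc
    · rw [comm]; exact inner23 v u hv4 hu4 hvt hut huc
    · exact inner33 u v hu4 hv4 hut huc hvt hvc hne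
end

section
/- The L5 kissing configuration is not closed under negation: there exists a point v in L5 such that -v is not in L5. In fact, exactly 24 of the 40 points of L5 come in antipodal pairs (i.e., exactly 24 points v satisfy -v ∈ L5). -/
namespace SignType

variable {α : Type*} [Ring α] [CharZero α]

lemma cast_injective : Function.Injective (SignType.cast : SignType → α) := by
  intro a b h
  cases a <;> cases b <;> first | rfl | norm_num at h

@[simp]
lemma cast_eq_zero {s : SignType} : (s : α) = 0 ↔ s = 0 :=
  cast_injective.eq_iff' coe_zero

lemma exists_cast_eq_iff {x : α} : (∃ s : SignType, (s : α) = x) ↔ x = -1 ∨ x = 0 ∨ x = 1 := by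
  constructor
  · rintro ⟨s, rfl⟩
    cases s <;> simp
  · rintro (rfl | rfl | rfl)
    exacts [⟨-1, coe_neg_one⟩, ⟨0, coe_zero⟩, ⟨1, coe_one⟩]

end SignType

lemma setOf_forall_eq_neg_one_or_zero_or_one {ι α : Type*} [Ring α] [CharZero α] :
    {v : ι → α | ∀ i, v i = -1 ∨ v i = 0 ∨ v i = 1} = Set.range (SignType.cast ∘ ·) := by
  ext v
  simp only [Set.mem_ofPred_eq, Set.mem_range, ← SignType.exists_cast_eq_iff, Classical.skolem,
    funext_iff, Function.comp_apply]

lemma neg_mem_L5_iff {v : Fin 5 → ℝ} (hv : v ∈ L5) : -v ∈ L5 ↔ v 4 = 0 := by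
  constructor
  · intro hnv
    rcases hv with ⟨h4, -⟩ | ⟨h4, hhalf, -⟩ | ⟨h4, hint, -⟩
    · exact h4
    · rcases hnv with ⟨h, -⟩ | ⟨h, -⟩ | ⟨-, hint, -⟩
      · norm_num [h4] at h
      · norm_num [h4] at h
      · rcases hhalf 0 with h | h <;> rcases hint 0 with h' | h' | h' <;>
          simp only [Fin.castSucc_zero, Pi.neg_apply] at h h' <;> linarith
    · rcases hnv with ⟨h, -⟩ | ⟨-, hhalf, -⟩ | ⟨h, -⟩
      · norm_num [h4] at h
      · rcases hint 0 with h | h | h <;> rcases hhalf 0 with h' | h' <;>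
          simp only [Fin.castSucc_zero, Pi.neg_apply] at h h' <;> linarith
      · norm_num [h4] at h
  · intro h4
    rcases hv with ⟨-, hval, hcard⟩ | ⟨h, -⟩ | ⟨h, -⟩
    · refine Or.inl ⟨by simp [h4], fun i => ?_, by simpa using hcard⟩
      rcases hval i with h | h | h <;> simp [h]
    · norm_num [h4] at h
    · norm_num [h4] at h

lemma L5_sep_last_eq_zero :
    {v ∈ L5 | v 4 = 0} = (SignType.cast ∘ ·) ''
      {s : Fin 5 → SignType | s 4 = 0 ∧ (Finset.univ.filter fun i => s i ≠ 0).card = 2} := by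
  ext v
  constructor
  · rintro ⟨hv, h4⟩
    rcases hv with ⟨-, hval, hcard⟩ | ⟨h, -⟩ | ⟨h, -⟩
    · obtain ⟨s, rfl⟩ : v ∈ Set.range (SignType.cast ∘ ·) := by
        rw [← setOf_forall_eq_neg_one_or_zero_or_one]
        exact hval
      exact ⟨s, ⟨by simpa using h4, by simpa using hcard⟩, rfl⟩
    · norm_num [h4] at h
    · norm_num [h4] at h
  · rintro ⟨s, ⟨hs4, hcard⟩, rfl⟩
    refine ⟨Or.inl ⟨by simp [hs4], fun i => ?_, by simpa using hcard⟩, by simp [hs4]⟩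
    exact SignType.exists_cast_eq_iff.1 ⟨s i, rfl⟩

lemma ncard_L5_sep_last_eq_zero : {v ∈ L5 | v 4 = 0}.ncard = 24 := by
  rw [L5_sep_last_eq_zero, Set.ncard_image_of_injective _ SignType.cast_injective.comp_left,
    ← Finset.coe_filter_univ, Set.ncard_coe_finset]
  decide

theorem stmt3 :
    (∃ v ∈ L5, -v ∉ L5) ∧
    Set.ncard {v | v ∈ L5 ∧ -v ∈ L5} = 24 := by
  have hw : (![1, 0, 0, 0, -1] : Fin 5 → ℝ) ∈ L5 := by
    refine Or.inr (Or.inr ⟨rfl, ?_, ?_⟩)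
    · simp [Fin.forall_fin_succ]
    · simp [Fin.univ_succ, Finset.filter_insert]
  refine ⟨⟨_, hw, (neg_mem_L5_iff hw).not.mpr (by simp [Matrix.cons_val])⟩, ?_⟩
  have hanti : {v | v ∈ L5 ∧ -v ∈ L5} = {v ∈ L5 | v 4 = 0} :=
    Set.ext fun _ => and_congr_right neg_mem_L5_iff
  rw [hanti, ncard_L5_sep_last_eq_zero]
end
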